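/- Let M ≥ 1, let ρ^M_1, …, ρ^M_M be nonnegative real numbers, and let ρ^M : ℝ → [0, ∞) be the even piecewise-constant function with ρ^M(s) = ρ^M_i for |s| ∈ ((i−1)/M, i/M), i = 1, …, M, and ρ^M(s) = 0 for |s| > 1. Let u ∈ L¹_loc(ℝ), ε > 0 and k ∈ ℤ, and define the averages ū_j = (M/ε) ∫_{ε(j−1)/M}^{εj/M} u(t) dt. Then (1/ε²) ∫_{−ε}^{ε} ρ^M(ξ/ε) u(εk/M + ξ) sign(ξ) dξ = (1/(εM)) ( ∑_{i=1}^{M} ρ^M_i ū_{k+i} − ∑_{i=1}^{M} ρ^M_i ū_{k+1−i} ); that is, the scaled continuum nonlocal gradient of u for the discretized kernel at the point εk/M equals the scaled discrete nonlocal gradient of the sequence of averages ū. -/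

import Mathlib

open MeasureTheory

/-- The measurable step function representing the discretized kernel. -/
noncomputable def stepKer (M : ℕ) (ρM : ℕ → ℝ) : ℝ → ℝ :=
  fun s => ∑ i ∈ Finset.Icc 1 M,
    Set.indicator {t : ℝ | ((i : ℝ) - 1) / M < |t| ∧ |t| < (i : ℝ) / M} (fun _ => ρM i) s

lemma stepKer_measurable (M : ℕ) (ρM : ℕ → ℝ) : Measurable (stepKer M ρM) := by
  apply Finset.measurable_sum
  intro i _
  apply Measurable.indicator measurable_const
  have : {t : ℝ | ((i : ℝ) - 1) / M < |t| ∧ |t| < (i : ℝ) / M}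
      = {t : ℝ | ((i : ℝ) - 1) / M < |t|} ∩ {t : ℝ | |t| < (i : ℝ) / M} := rfl
  rw [this]
  exact (measurableSet_lt measurable_const measurable_id.abs).inter
    (measurableSet_lt measurable_id.abs measurable_const)

lemma measurable_realSign : Measurable Real.sign := by
  unfold Real.sign
  exact Measurable.ite (measurableSet_lt measurable_id measurable_const) measurable_const
    (Measurable.ite (measurableSet_lt measurable_const measurable_id) measurable_const
      measurable_const)

lemma abs_realSign_le (x : ℝ) : |Real.sign x| ≤ 1 := by
  rcases lt_trichotomy x 0 with h | h | h
  · rw [Real.sign_of_neg h]; norm_num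
  · rw [h, Real.sign_zero]; norm_num
  · rw [Real.sign_of_pos h]; norm_num

lemma stepKer_eq (M : ℕ) (ρM : ℕ → ℝ) (i : ℕ) (hi : i ∈ Finset.Icc 1 M) (s : ℝ)
    (h1 : ((i : ℝ) - 1) / M < |s|) (h2 : |s| < (i : ℝ) / M) :
    stepKer M ρM s = ρM i := by
  obtain ⟨hi1, hi2⟩ := Finset.mem_Icc.mp hi
  have hMpos : (0 : ℝ) < M := by
    have : (1 : ℝ) ≤ M := by exact_mod_cast le_trans hi1 hi2
    linarith
  rw [stepKer, Finset.sum_eq_single i]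
  · exact Set.indicator_of_mem (by exact ⟨h1, h2⟩) _
  · intro j hj hne
    obtain ⟨hj1, hj2⟩ := Finset.mem_Icc.mp hj
    apply Set.indicator_of_notMem
    rintro ⟨hja, hjb⟩
    rcases lt_or_gt_of_ne hne with hlt | hgt
    ·
      have hcast : (j : ℝ) ≤ (i : ℝ) - 1 := by
        have : (j : ℝ) + 1 ≤ i := by exact_mod_cast hlt
        linarith
      have : (j : ℝ) / M ≤ ((i : ℝ) - 1) / M := by gcongr
      linarith
    · have hcast : (i : ℝ) ≤ (j : ℝ) - 1 := by
        have : (i : ℝ) + 1 ≤ j := by exact_mod_cast hgt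
        linarith
      have : (i : ℝ) / M ≤ ((j : ℝ) - 1) / M := by gcongr
      linarith
  · intro h; exact absurd hi h

lemma stepKer_abs_le (M : ℕ) (ρM : ℕ → ℝ) (s : ℝ) :
    |stepKer M ρM s| ≤ ∑ i ∈ Finset.Icc 1 M, |ρM i| := by
  refine (Finset.abs_sum_le_sum_abs _ _).trans (Finset.sum_le_sum fun i _ => ?_)
  simpa [Real.norm_eq_abs] using
    norm_indicator_le_norm_self (s := {t : ℝ | ((i : ℝ) - 1) / M < |t| ∧ |t| < (i : ℝ) / M})
      (fun _ => ρM i) s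

lemma ρMfun_eq_stepKer (M : ℕ) (hM : 1 ≤ M) (ρM : ℕ → ℝ) (ρMfun : ℝ → ℝ)
    (heven : ∀ s : ℝ, ρMfun (-s) = ρMfun s)
    (hval : ∀ i ∈ Finset.Icc 1 M, ∀ s : ℝ,
      ((i : ℝ) - 1) / M < s → s < (i : ℝ) / M → ρMfun s = ρM i)
    (hzero : ∀ s : ℝ, 1 < |s| → ρMfun s = 0)
    (s : ℝ) (hs : ¬∃ j : ℕ, |s| = (j : ℝ) / M) :
    ρMfun s = stepKer M ρM s := by
  have hMpos : (0 : ℝ) < M := by exact_mod_cast hM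
  have hs1 : |s| ≠ 1 := by
    intro h
    exact hs ⟨M, by rw [h, div_self hMpos.ne']⟩
  have hs0 : |s| ≠ 0 := by
    intro h
    exact hs ⟨0, by rw [h]; simp⟩
  have habs : ρMfun |s| = ρMfun s := by
    rcases abs_choice s with h | h
    · rw [h]
    · rw [h]; exact heven s
  rcases lt_or_gt_of_ne hs1 with hlt | hgt
  · -- |s| < 1
    have hpos : 0 < |s| := lt_of_le_of_ne (abs_nonneg s) (Ne.symm hs0)
    set i := ⌈|s| * M⌉₊ with hi_def
    have hxM : 0 < |s| * M := mul_pos hpos hMpos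
    have hi1 : 1 ≤ i := Nat.one_le_iff_ne_zero.mpr (by
      intro h
      have := Nat.ceil_eq_zero.mp h
      linarith)
    have hi2 : i ≤ M := Nat.ceil_le.mpr (by nlinarith)
    have hile : |s| * M ≤ i := Nat.le_ceil _
    have hine : |s| * M ≠ i := by
      intro h
      exact hs ⟨i, by field_simp [eq_div_iff hMpos.ne', h]; exact h⟩
    have hup : |s| * M < i := lt_of_le_of_ne hile hine
    have hlow : (i : ℝ) - 1 < |s| * M := by
      have := Nat.ceil_lt_add_one hxM.le
      push_cast at this ⊢
      linarith
    have hd1 : ((i : ℝ) - 1) / M < |s| := by rw [div_lt_iff₀ hMpos]; linarith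
    have hd2 : |s| < (i : ℝ) / M := by rw [lt_div_iff₀ hMpos]; linarith
    have himem : i ∈ Finset.Icc 1 M := Finset.mem_Icc.mpr ⟨hi1, hi2⟩
    rw [stepKer_eq M ρM i himem s hd1 hd2, ← habs]
    exact hval i himem |s| hd1 hd2
  · -- 1 < |s|
    rw [hzero s hgt, stepKer]
    symm
    apply Finset.sum_eq_zero
    intro i hi
    obtain ⟨_, hi2⟩ := Finset.mem_Icc.mp hi
    apply Set.indicator_of_notMem
    rintro ⟨-, hb⟩
    have : (i : ℝ) / M ≤ 1 := by
      rw [div_le_one hMpos]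
      exact_mod_cast hi2
    linarith

lemma sum_Icc_one (M : ℕ) (f : ℕ → ℝ) :
    ∑ i ∈ Finset.Icc 1 M, f i = ∑ j ∈ Finset.range M, f (j + 1) := by
  rw [← Finset.Ico_add_one_right_eq_Icc, Finset.sum_Ico_eq_sum_range]
  simp [add_comm]

/-- For the even piecewise-constant discretized kernel `ρ^M` and `u ∈ L¹_loc(ℝ)`, the scaled
continuum nonlocal gradient of `u` at `εk/M` equals the scaled discrete nonlocal gradient of
the sequence of averages `ū_j = (M/ε) ∫_{ε(j−1)/M}^{εj/M} u`. -/
theorem continuum_nonlocal_gradient_eq_discrete_of_averages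
    (M : ℕ) (hM : 1 ≤ M) (ρM : ℕ → ℝ) (hρM : ∀ i ∈ Finset.Icc 1 M, 0 ≤ ρM i)
    (ρMfun : ℝ → ℝ)
    (heven : ∀ s : ℝ, ρMfun (-s) = ρMfun s)
    (hval : ∀ i ∈ Finset.Icc 1 M, ∀ s : ℝ,
      ((i : ℝ) - 1) / M < s → s < (i : ℝ) / M → ρMfun s = ρM i)
    (hzero : ∀ s : ℝ, 1 < |s| → ρMfun s = 0)
    (u : ℝ → ℝ) (hu : LocallyIntegrable u (volume : Measure ℝ))
    (ε : ℝ) (hε : 0 < ε) (k : ℤ)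
    (ubar : ℤ → ℝ)
    (hubar : ∀ j : ℤ, ubar j = ((M : ℝ) / ε) * ∫ t in (ε * ((j : ℝ) - 1) / M)..(ε * (j : ℝ) / M), u t) :
    (1 / ε ^ 2) * ∫ ξ in (-ε)..ε, ρMfun (ξ / ε) * u (ε * (k : ℝ) / M + ξ) * Real.sign ξ
      = (1 / (ε * M)) *
          (∑ i ∈ Finset.Icc 1 M, ρM i * ubar (k + i)
            - ∑ i ∈ Finset.Icc 1 M, ρM i * ubar (k + 1 - i)) := by
  have hMpos : (0 : ℝ) < M := by exact_mod_cast hM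
  set c : ℝ := ε * (k : ℝ) / M with hc
  set G : ℝ → ℝ := fun ξ => stepKer M ρM (ξ / ε) * u (c + ξ) * Real.sign ξ with hG
  -- a.e. equality of kernels
  have hae : ∀ᵐ ξ : ℝ, ρMfun (ξ / ε) = stepKer M ρM (ξ / ε) := by
    have hEc : Set.Countable {s : ℝ | ∃ j : ℕ, |s| = (j : ℝ) / M} := by
      apply Set.Countable.mono (s₂ := ⋃ j : ℕ, ({(j : ℝ) / M, -((j : ℝ) / M)} : Set ℝ))
      · rintro s ⟨j, hj⟩
        apply Set.mem_iUnion.mpr ⟨j, ?_⟩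
        rcases abs_eq (by positivity : (0:ℝ) ≤ (j : ℝ) / M) |>.mp hj with h | h
        · exact Set.mem_insert_iff.mpr (Or.inl h)
        · exact Set.mem_insert_iff.mpr (Or.inr (by simp [h]))
      · exact Set.countable_iUnion fun j => (Set.countable_singleton _).insert _
    have hεne : ε ≠ 0 := hε.ne'
    have hinj : Function.Injective (fun ξ : ℝ => ξ / ε) := fun a b h => by
      field_simp at h
      exact h
    have hB : (volume : Measure ℝ)
        ((fun ξ : ℝ => ξ / ε) ⁻¹' {s : ℝ | ∃ j : ℕ, |s| = (j : ℝ) / M}) = 0 :=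
      (hEc.preimage hinj).measure_zero _
    filter_upwards [measure_eq_zero_iff_ae_notMem.mp hB] with ξ hξ
    exact ρMfun_eq_stepKer M hM ρM ρMfun heven hval hzero (ξ / ε) hξ
  have hLHScongr : (∫ ξ in (-ε)..ε, ρMfun (ξ / ε) * u (c + ξ) * Real.sign ξ)
      = ∫ ξ in (-ε)..ε, G ξ := by
    apply intervalIntegral.integral_congr_ae
    filter_upwards [hae] with ξ h _
    rw [hG]; simp only []; rw [h]
  -- interval integrability of G
  have hGI : ∀ a b : ℝ, IntervalIntegrable G volume a b := by
    intro a b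
    have hui : IntervalIntegrable (fun ξ => u (c + ξ)) volume a b := by
      have h1 : IntervalIntegrable u volume (c + a) (c + b) :=
        intervalIntegrable_iff.mpr
          ((hu.integrableOn_isCompact isCompact_uIcc).mono_set Set.uIoc_subset_uIcc)
      simpa using h1.comp_add_left c
    have hmeas : Measurable fun ξ : ℝ => stepKer M ρM (ξ / ε) * Real.sign ξ :=
      ((stepKer_measurable M ρM).comp (measurable_id.div_const ε)).mul measurable_realSign
    have hbd : ∀ ξ : ℝ, ‖stepKer M ρM (ξ / ε) * Real.sign ξ‖ ≤ ∑ i ∈ Finset.Icc 1 M, |ρM i| := by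
      intro ξ
      rw [Real.norm_eq_abs, abs_mul]
      calc |stepKer M ρM (ξ / ε)| * |Real.sign ξ|
          ≤ (∑ i ∈ Finset.Icc 1 M, |ρM i|) * 1 :=
            mul_le_mul (stepKer_abs_le M ρM _) (abs_realSign_le ξ) (abs_nonneg _)
              (Finset.sum_nonneg fun i _ => abs_nonneg _)
        _ = _ := mul_one _
    have hprod : IntervalIntegrable
        (fun ξ => (stepKer M ρM (ξ / ε) * Real.sign ξ) * u (c + ξ)) volume a b := by
      constructor
      · exact hui.1.bdd_mul hmeas.aestronglyMeasurable (ae_of_all _ hbd)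
      · exact hui.2.bdd_mul hmeas.aestronglyMeasurable (ae_of_all _ hbd)
    have heq : G = fun ξ => (stepKer M ρM (ξ / ε) * Real.sign ξ) * u (c + ξ) := by
      funext ξ; rw [hG]; ring
    rw [heq]
    exact hprod
  have hne : ∀ r : ℝ, ∀ᵐ ξ : ℝ, ξ ≠ r := fun r => by
    simp [ae_iff]
  have hcancel : ε / (M : ℝ) * ((M : ℝ) / ε) = 1 := by field_simp
  -- positive pieces
  have hpos : ∀ i ∈ Finset.Icc 1 M,
      (∫ ξ in (ε * ((i : ℝ) - 1) / M)..(ε * (i : ℝ) / M), G ξ)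
        = ρM i * ((ε / M) * ubar (k + i)) := by
    intro i hi
    obtain ⟨hi1, hi2⟩ := Finset.mem_Icc.mp hi
    have hi1' : (1 : ℝ) ≤ i := by exact_mod_cast hi1
    have hab : ε * ((i : ℝ) - 1) / M ≤ ε * (i : ℝ) / M := by
      gcongr
      linarith
    have hcong : (∫ ξ in (ε * ((i : ℝ) - 1) / M)..(ε * (i : ℝ) / M), G ξ)
        = ∫ ξ in (ε * ((i : ℝ) - 1) / M)..(ε * (i : ℝ) / M), ρM i * u (c + ξ) := by
      apply intervalIntegral.integral_congr_ae
      filter_upwards [hne (ε * (i : ℝ) / M)] with ξ hξb hmem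
      rw [Set.uIoc_of_le hab] at hmem
      obtain ⟨hl, hr⟩ := hmem
      have hr' : ξ < ε * (i : ℝ) / M := lt_of_le_of_ne hr hξb
      have h0a : 0 ≤ ε * ((i : ℝ) - 1) / M :=
        div_nonneg (mul_nonneg hε.le (by linarith)) hMpos.le
      have hξpos : 0 < ξ := lt_of_le_of_lt h0a hl
      have hd1 : ((i : ℝ) - 1) / M < |ξ / ε| := by
        rw [abs_of_pos (div_pos hξpos hε), lt_div_iff₀ hε]
        have he : ((i : ℝ) - 1) / M * ε = ε * ((i : ℝ) - 1) / M := by ring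
        linarith
      have hd2 : |ξ / ε| < (i : ℝ) / M := by
        rw [abs_of_pos (div_pos hξpos hε), div_lt_iff₀ hε]
        have he : (i : ℝ) / M * ε = ε * (i : ℝ) / M := by ring
        linarith
      rw [hG]
      simp only []
      rw [stepKer_eq M ρM i hi (ξ / ε) hd1 hd2, Real.sign_of_pos hξpos, mul_one]
    rw [hcong, intervalIntegral.integral_const_mul]
    congr 1
    rw [intervalIntegral.integral_comp_add_left u c]
    have e1 : c + ε * ((i : ℝ) - 1) / M = ε * (((k + (i : ℤ) : ℤ) : ℝ) - 1) / M := by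
      rw [hc]; push_cast; ring
    have e2 : c + ε * (i : ℝ) / M = ε * (((k + (i : ℤ) : ℤ) : ℝ)) / M := by
      rw [hc]; push_cast; ring
    rw [e1, e2, hubar (k + i), ← mul_assoc, hcancel, one_mul]
  -- negative pieces
  have hneg : ∀ i ∈ Finset.Icc 1 M,
      (∫ ξ in (-(ε * (i : ℝ) / M))..(-(ε * ((i : ℝ) - 1) / M)), G ξ)
        = -(ρM i * ((ε / M) * ubar (k + 1 - i))) := by
    intro i hi
    obtain ⟨hi1, hi2⟩ := Finset.mem_Icc.mp hi
    have hi1' : (1 : ℝ) ≤ i := by exact_mod_cast hi1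
    have hab : -(ε * (i : ℝ) / M) ≤ -(ε * ((i : ℝ) - 1) / M) := by
      apply neg_le_neg
      gcongr
      linarith
    have h0b : -(ε * ((i : ℝ) - 1) / M) ≤ 0 := by
      have : 0 ≤ ε * ((i : ℝ) - 1) / M :=
        div_nonneg (mul_nonneg hε.le (by linarith)) hMpos.le
      linarith
    have hcong : (∫ ξ in (-(ε * (i : ℝ) / M))..(-(ε * ((i : ℝ) - 1) / M)), G ξ)
        = ∫ ξ in (-(ε * (i : ℝ) / M))..(-(ε * ((i : ℝ) - 1) / M)), (-(ρM i)) * u (c + ξ) := by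
      apply intervalIntegral.integral_congr_ae
      filter_upwards [hne (-(ε * ((i : ℝ) - 1) / M))] with ξ hξb hmem
      rw [Set.uIoc_of_le hab] at hmem
      obtain ⟨hl, hr⟩ := hmem
      have hr' : ξ < -(ε * ((i : ℝ) - 1) / M) := lt_of_le_of_ne hr hξb
      have hξneg : ξ < 0 := lt_of_lt_of_le hr' h0b
      have habs : |ξ / ε| = -ξ / ε := by
        rw [abs_of_neg (div_neg_of_neg_of_pos hξneg hε), neg_div]
      have hd1 : ((i : ℝ) - 1) / M < |ξ / ε| := by
        rw [habs, lt_div_iff₀ hε]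
        have he : ((i : ℝ) - 1) / M * ε = ε * ((i : ℝ) - 1) / M := by ring
        linarith
      have hd2 : |ξ / ε| < (i : ℝ) / M := by
        rw [habs, div_lt_iff₀ hε]
        have he : (i : ℝ) / M * ε = ε * (i : ℝ) / M := by ring
        linarith
      rw [hG]
      simp only []
      rw [stepKer_eq M ρM i hi (ξ / ε) hd1 hd2, Real.sign_of_neg hξneg]
      ring
    rw [hcong, intervalIntegral.integral_const_mul]
    rw [intervalIntegral.integral_comp_add_left u c]
    have e1 : c + -(ε * (i : ℝ) / M) = ε * (((k + 1 - (i : ℤ) : ℤ) : ℝ) - 1) / M := by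
      rw [hc]; push_cast; ring
    have e2 : c + -(ε * ((i : ℝ) - 1) / M) = ε * (((k + 1 - (i : ℤ) : ℤ) : ℝ)) / M := by
      rw [hc]; push_cast; ring
    rw [e1, e2, hubar (k + 1 - i), ← mul_assoc (ε / (M : ℝ)) ((M : ℝ) / ε), hcancel, one_mul]
    ring
  -- summing the positive pieces
  have hposSum : (∫ ξ in (0 : ℝ)..ε, G ξ)
      = ∑ j ∈ Finset.range M, ρM (j + 1) * ((ε / M) * ubar (k + ((j + 1 : ℕ) : ℤ))) := by
    have htel := intervalIntegral.sum_integral_adjacent_intervals (μ := volume) (f := G)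
      (a := fun j : ℕ => ε * (j : ℝ) / M) (n := M) (fun j _ => hGI _ _)
    rw [show ε * ((0 : ℕ) : ℝ) / M = 0 by simp,
        show ε * ((M : ℕ) : ℝ) / M = ε by field_simp] at htel
    rw [← htel]
    apply Finset.sum_congr rfl
    intro j hj
    have e1 : ε * ((j : ℕ) : ℝ) / M = ε * (((j + 1 : ℕ) : ℝ) - 1) / M := by push_cast; ring
    have hmem : j + 1 ∈ Finset.Icc 1 M :=
      Finset.mem_Icc.mpr ⟨Nat.succ_le_succ (Nat.zero_le _),
        Nat.succ_le_of_lt (Finset.mem_range.mp hj)⟩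
    calc (∫ ξ in (ε * ((j : ℕ) : ℝ) / M)..(ε * (((j + 1 : ℕ)) : ℝ) / M), G ξ)
        = ∫ ξ in (ε * (((j + 1 : ℕ) : ℝ) - 1) / M)..(ε * (((j + 1 : ℕ)) : ℝ) / M), G ξ := by
          rw [e1]
      _ = ρM (j + 1) * ((ε / M) * ubar (k + ((j + 1 : ℕ) : ℤ))) := hpos (j + 1) hmem
  -- summing the negative pieces
  have hnegSum : (∫ ξ in (-ε)..(0 : ℝ), G ξ)
      = ∑ j ∈ Finset.range M, -(ρM (j + 1) * ((ε / M) * ubar (k + 1 - ((j + 1 : ℕ) : ℤ)))) := by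
    have htel := intervalIntegral.sum_integral_adjacent_intervals (μ := volume) (f := G)
      (a := fun j : ℕ => -(ε * (((M - j : ℕ)) : ℝ) / M)) (n := M) (fun j _ => hGI _ _)
    rw [show -(ε * (((M - 0 : ℕ)) : ℝ) / M) = -ε by rw [Nat.sub_zero]; field_simp,
        show -(ε * (((M - M : ℕ)) : ℝ) / M) = 0 by simp] at htel
    have hrefl := Finset.sum_range_reflect
      (fun j => -(ρM (j + 1) * ((ε / M) * ubar (k + 1 - ((j + 1 : ℕ) : ℤ))))) M
    rw [← htel, ← hrefl]
    apply Finset.sum_congr rfl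
    intro j hj
    have hjM : j < M := Finset.mem_range.mp hj
    have h1 : M - 1 - j + 1 = M - j := by omega
    have hmem : M - j ∈ Finset.Icc 1 M := Finset.mem_Icc.mpr ⟨by omega, by omega⟩
    have e1 : -(ε * (((M - j : ℕ)) : ℝ) / M) = -(ε * (((M - j : ℕ) : ℝ)) / M) := rfl
    have e2 : -(ε * (((M - (j + 1) : ℕ)) : ℝ) / M) = -(ε * ((((M - j : ℕ) : ℝ)) - 1) / M) := by
      have : ((M - (j + 1) : ℕ) : ℝ) = ((M - j : ℕ) : ℝ) - 1 := by
        have h2 : M - (j + 1) + 1 = M - j := by omega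
        rw [← h2]
        push_cast
        ring
      rw [this]
    rw [h1]
    calc (∫ ξ in (-(ε * (((M - j : ℕ)) : ℝ) / M))..(-(ε * (((M - (j + 1) : ℕ)) : ℝ) / M)), G ξ)
        = ∫ ξ in (-(ε * (((M - j : ℕ) : ℝ)) / M))..(-(ε * ((((M - j : ℕ) : ℝ)) - 1) / M)), G ξ := by
          rw [e2]
      _ = -(ρM (M - j) * ((ε / M) * ubar (k + 1 - ((M - j : ℕ) : ℤ)))) := hneg (M - j) hmem
  -- assembling
  have hsplit : (∫ ξ in (-ε)..ε, G ξ)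
      = (∫ ξ in (-ε)..(0 : ℝ), G ξ) + ∫ ξ in (0 : ℝ)..ε, G ξ :=
    (intervalIntegral.integral_add_adjacent_intervals (hGI _ _) (hGI _ _)).symm
  rw [hLHScongr, hsplit, hnegSum, hposSum,
    sum_Icc_one M (fun i => ρM i * ubar (k + (i : ℤ))),
    sum_Icc_one M (fun i => ρM i * ubar (k + 1 - (i : ℤ)))]
  have hfact1 : ∑ j ∈ Finset.range M, -(ρM (j + 1) * ((ε / M) * ubar (k + 1 - ((j + 1 : ℕ) : ℤ))))
      = -((ε / M) * ∑ j ∈ Finset.range M, ρM (j + 1) * ubar (k + 1 - ((j + 1 : ℕ) : ℤ))) := by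
    rw [Finset.mul_sum, ← Finset.sum_neg_distrib]
    exact Finset.sum_congr rfl fun j _ => by ring
  have hfact2 : ∑ j ∈ Finset.range M, ρM (j + 1) * ((ε / M) * ubar (k + ((j + 1 : ℕ) : ℤ)))
      = (ε / M) * ∑ j ∈ Finset.range M, ρM (j + 1) * ubar (k + ((j + 1 : ℕ) : ℤ)) := by
    rw [Finset.mul_sum]
    exact Finset.sum_congr rfl fun j _ => by ring
  rw [hfact1, hfact2]
  field_simp
  ring
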